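/- arXiv:2010.02518 — 2 statements merged into one kernel-verified Lean document; each statement's English description precedes it below -/
import Mathlib

section
/- Concatenated construction: if there exists a strongly $\bar{d}$-separable code of length $t$, size $n$, over an alphabet of size $q$, then there exists a $d$-SSM of size $tq \times n$. Concretely, replacing each symbol $k \in \{0, \dots, q-1\}$ of each codeword by the binary indicator vector of length $q$ with a $1$ in position $k$ yields a binary $tq \times n$ matrix that is a $d$-SSM. -/
noncomputable def boolSum {ι : Type*} (F : Finset (ι → Bool)) : ι → Bool := F.sup id

def desc {t q : ℕ} (A : Finset (Fin t → Fin q)) : Set (Fin t → Fin q) :=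
  {x | ∀ i, ∃ c ∈ A, x i = c i}

/-- Concatenation: replace each symbol `k ∈ {0,…,q-1}` of a codeword by the
binary indicator vector of length `q` with a `1` in position `k`. -/
def expand {t q : ℕ} (c : Fin t → Fin q) : Fin t × Fin q → Bool :=
  fun p => decide (c p.1 = p.2)

/-! Row `(i, j)` of the concatenated matrix records whether symbol `j` occurs in coordinate `i`,
so the Boolean sum of a set of columns is the list of symbol sets `{c i : c ∈ A}`, which
determines `desc A`. Equal Boolean sums therefore pull back to equal descendant sets, and
strong separability of the code transfers to the matrix. -/

theorem Finset.sup_eq_true_iff {α : Type*} (s : Finset α) (g : α → Bool) :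
    s.sup g = true ↔ ∃ a ∈ s, g a = true := by
  have h := Finset.le_sup_iff (f := g) (a := ⊤) (s := s) rfl
  simp only [top_le_iff] at h
  exact h

theorem expand_injective {t q : ℕ} : Function.Injective (expand (t := t) (q := q)) := by
  intro c c' h
  funext i
  simpa [expand, eq_comm] using congrFun h (i, c i)

theorem boolSum_image_expand_apply {t q : ℕ} (A : Finset (Fin t → Fin q)) (i : Fin t)
    (j : Fin q) : boolSum (A.image expand) (i, j) = true ↔ ∃ c ∈ A, c i = j := by
  simp [boolSum, Finset.sup_apply, Finset.sup_eq_true_iff, expand]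

theorem desc_congr {t q : ℕ} {A B : Finset (Fin t → Fin q)}
    (h : ∀ i j, (∃ c ∈ A, c i = j) ↔ ∃ c ∈ B, c i = j) : desc A = desc B := by
  ext x
  simp only [desc, Set.mem_ofPred_eq, eq_comm (a := x _), h]

theorem desc_eq_of_boolSum_image_expand_eq {t q : ℕ} {A B : Finset (Fin t → Fin q)}
    (h : boolSum (A.image expand) = boolSum (B.image expand)) : desc A = desc B :=
  desc_congr fun i j => by
    rw [← boolSum_image_expand_apply, ← boolSum_image_expand_apply, h]

theorem ssc_to_ssm_general {t q n d : ℕ}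
    (C : Finset (Fin t → Fin q)) (hcard : C.card = n)
    (hssc : ∀ C0 ⊆ C, 1 ≤ C0.card → C0.card ≤ d →
      ∀ C' ⊆ C, desc C' = desc C0 → C0 ⊆ C') :
    (C.image expand).card = n ∧
    (∀ F0 ⊆ C.image expand, 1 ≤ F0.card → F0.card ≤ d →
      ∀ F' ⊆ C.image expand, boolSum F' = boolSum F0 → F0 ⊆ F') := by
  refine ⟨by rw [Finset.card_image_of_injective _ expand_injective, hcard], ?_⟩
  intro F0 hF0 hpos hle F' hF' hsum
  obtain ⟨C0, hC0, rfl⟩ := Finset.subset_image_iff.mp hF0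
  obtain ⟨C', hC', rfl⟩ := Finset.subset_image_iff.mp hF'
  rw [Finset.card_image_of_injective _ expand_injective] at hpos hle
  exact Finset.image_subset_image
    (hssc C0 hC0 hpos hle C' hC' (desc_eq_of_boolSum_image_expand_eq hsum))

/-- If there is a strongly `d̄`-separable `(t, n, q)` code, then the concatenated
construction yields a `d`-SSM of size `tq × n`. -/
theorem ssc_to_ssm {t q n d : ℕ} (hd : 2 ≤ d)
    (C : Finset (Fin t → Fin q)) (hcard : C.card = n)
    (hssc : ∀ C0 ⊆ C, 1 ≤ C0.card → C0.card ≤ d →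
      ∀ C' ⊆ C, desc C' = desc C0 → C0 ⊆ C') :
    (C.image expand).card = n ∧
    (∀ F0 ⊆ C.image expand, 1 ≤ F0.card → F0.card ≤ d →
      ∀ F' ⊆ C.image expand, boolSum F' = boolSum F0 → F0 ⊆ F') :=
  ssc_to_ssm_general C hcard hssc
end

section
/- Minimal frame size bound: let $\mathcal{C}$ be a $(t,n,q)$ code and let $\mathcal{C}_0 \subseteq \mathcal{C}$ with $1 \le |\mathcal{C}_0| \le d$. Then any minimal frame $\mathcal{C}'$ of $\mathcal{C}_0$ satisfies $|\mathcal{C}'| \le td - t + 1$. -/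
open Finset

variable {t q : ℕ}

def UniqueAt (A : Finset (Fin t → Fin q)) (c : Fin t → Fin q) (i : Fin t) : Prop :=
  ∀ c' ∈ A, c' i = c i → c' = c

lemma mem_desc_iff {A : Finset (Fin t → Fin q)} {x : Fin t → Fin q} :
    x ∈ desc A ↔ ∀ i, x i ∈ A.image (· i) := by
  simp only [desc, Set.mem_ofPred_eq, mem_image, eq_comm]

lemma mem_desc_of_mem {A : Finset (Fin t → Fin q)} {c : Fin t → Fin q} (hc : c ∈ A) :
    c ∈ desc A :=
  fun _ => ⟨c, hc, rfl⟩

lemma desc_mono {A B : Finset (Fin t → Fin q)} (h : A ⊆ B) : desc A ⊆ desc B := by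
  intro x hx i
  obtain ⟨c, hc, hxc⟩ := hx i
  exact ⟨c, h hc, hxc⟩

lemma exists_uniqueAt_of_desc_erase_ne {A : Finset (Fin t → Fin q)} {c : Fin t → Fin q}
    (hne : desc (A.erase c) ≠ desc A) : ∃ i, UniqueAt A c i := by
  by_contra! hdup
  simp only [UniqueAt, not_forall, exists_prop] at hdup
  refine hne (Set.Subset.antisymm (desc_mono (erase_subset c A)) fun x hx i => ?_)
  obtain ⟨c'', hc'', hxc''⟩ := hx i
  by_cases h : c'' = c
  · obtain ⟨c', hc', hc'i, hc'c⟩ := hdup i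
    exact ⟨c', mem_erase.mpr ⟨hc'c, hc'⟩, by rw [hxc'', h, hc'i]⟩
  · exact ⟨c'', mem_erase.mpr ⟨h, hc''⟩, hxc''⟩

section Counting

variable {A B : Finset (Fin t → Fin q)}

lemma card_add_one_le_of_uniqueAt {S : Finset (Fin t → Fin q)} {c₀ : Fin t → Fin q} {i : Fin t}
    (hA : ∀ c ∈ A, c ∈ desc B) (hSA : S ⊆ A) (hS : ∀ c ∈ S, UniqueAt A c i)
    (hc₀ : c₀ ∈ A) (hc₀S : c₀ ∉ S) : S.card + 1 ≤ B.card := by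
  have hmaps : ∀ c ∈ insert c₀ S, c i ∈ B.image (· i) := fun c hc =>
    mem_desc_iff.mp (hA c (insert_subset hc₀ hSA hc)) i
  -- any two words of `insert c₀ S` include one that is unique at `i`
  have hinj : Set.InjOn (· i) ((insert c₀ S : Finset (Fin t → Fin q)) : Set (Fin t → Fin q)) := by
    intro a ha b hb hab
    rcases mem_insert.mp (mem_coe.mp hb) with rfl | hb
    · rcases mem_insert.mp (mem_coe.mp ha) with rfl | ha
      · rfl
      · exact (hS a ha b hc₀ hab.symm).symm
    · exact hS b hb a (insert_subset hc₀ hSA ha) hab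
  calc S.card + 1 = (insert c₀ S).card := (card_insert_of_notMem hc₀S).symm
    _ ≤ (B.image (· i)).card := card_le_card_of_injOn (· i) hmaps hinj
    _ ≤ B.card := card_image_le

lemma card_le_of_forall_exists_uniqueAt (hA : ∀ c ∈ A, c ∈ desc B)
    (huniq : ∀ c ∈ A, ∃ i, UniqueAt A c i) : A.card ≤ t * (B.card - 1) + 1 := by
  classical
  obtain rfl | ⟨c₀, hc₀⟩ := A.eq_empty_or_nonempty
  · simp
  set P : Fin t → Finset (Fin t → Fin q) := fun i => (A.erase c₀).filter (UniqueAt A · i)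
  have hcover : A.erase c₀ ⊆ univ.biUnion P := fun c hc => by
    obtain ⟨i, hi⟩ := huniq c (mem_of_mem_erase hc)
    exact mem_biUnion.mpr ⟨i, mem_univ i, mem_filter.mpr ⟨hc, hi⟩⟩
  have hP : ∀ i, (P i).card ≤ B.card - 1 := fun i => by
    have := card_add_one_le_of_uniqueAt (S := P i) hA
      ((filter_subset _ _).trans (erase_subset c₀ A)) (fun c hc => (mem_filter.mp hc).2) hc₀
      fun h => (mem_erase.mp (mem_filter.mp h).1).1 rfl
    omega
  calc A.card = (A.erase c₀).card + 1 := (card_erase_add_one hc₀).symm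
    _ ≤ ∑ i, (P i).card + 1 := by gcongr; exact (card_le_card hcover).trans card_biUnion_le
    _ ≤ ∑ _i : Fin t, (B.card - 1) + 1 := by gcongr with i; exact hP i
    _ = t * (B.card - 1) + 1 := by simp

end Counting

theorem minimal_frame_card_bound_general {t q d : ℕ}
    (C0 : Finset (Fin t → Fin q))
    (h2 : C0.card ≤ d)
    (C' : Finset (Fin t → Fin q))
    (hframe : desc C' = desc C0)
    (hmin : ∀ c ∈ C', desc (C'.erase c) ≠ desc C0) :
    C'.card ≤ t * d - t + 1 := by
  have hcover : ∀ c ∈ C', c ∈ desc C0 := fun c hc => hframe ▸ mem_desc_of_mem hc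
  have huniq : ∀ c ∈ C', ∃ i, UniqueAt C' c i := fun c hc =>
    exists_uniqueAt_of_desc_erase_ne (hframe ▸ hmin c hc)
  calc C'.card ≤ t * (C0.card - 1) + 1 := card_le_of_forall_exists_uniqueAt hcover huniq
    _ ≤ t * (d - 1) + 1 := by gcongr
    _ = t * d - t + 1 := by rw [Nat.mul_sub_one]

/-- Any minimal frame of a set `C₀` of at most `d` codewords has size at most
`td - t + 1`. -/
theorem minimal_frame_card_bound {t q n d : ℕ} (hd : 1 ≤ d)
    (C : Finset (Fin t → Fin q)) (hcard : C.card = n)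
    (C0 : Finset (Fin t → Fin q)) (hC0 : C0 ⊆ C)
    (h1 : 1 ≤ C0.card) (h2 : C0.card ≤ d)
    (C' : Finset (Fin t → Fin q)) (hC' : C' ⊆ C)
    (hframe : desc C' = desc C0)
    (hmin : ∀ c ∈ C', desc (C'.erase c) ≠ desc C0) :
    C'.card ≤ t * d - t + 1 :=
  minimal_frame_card_bound_general C0 h2 C' hframe hmin
end
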